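/- arXiv:1412.1398 — 8 statements merged into one kernel-verified Lean document; each statement's English description precedes it below -/
import Mathlib

section
/- The greedy k-center algorithm is a 2-approximation: if r_{opt}(k) is the minimum over all k-subsets C ⊆ P of max_{p∈P} dist(p,C), then the greedy radius r_k after picking k centers satisfies r_k ≤ 2·r_{opt}(k). -/
/-!
Let `δ` be the distance from `c k` to the earlier centres `c 0, …, c (k-1)`. By greediness every
point of `P` is within `δ` of those centres, so `r k ≤ δ`, and the `k + 1` points `c 0, …, c k`
are pairwise at distance at least `δ`. Any `k` centres `C` leave two of these points with a
common nearest centre, so `δ ≤ 2 · coverRadius P C` by the triangle inequality.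
-/

open Metric Set

variable {α : Type*} [PseudoMetricSpace α]

noncomputable def coverRadius (P C : Set α) : ℝ := sSup ((fun p => infDist p C) '' P)

lemma infDist_le_coverRadius {P : Set α} (hP : P.Finite) (C : Set α) {p : α} (hp : p ∈ P) :
    infDist p C ≤ coverRadius P C :=
  le_csSup (hP.image _).bddAbove ⟨p, hp, rfl⟩

lemma coverRadius_le {P C : Set α} (hP : P.Nonempty) {R : ℝ} (h : ∀ p ∈ P, infDist p C ≤ R) :
    coverRadius P C ≤ R :=
  csSup_le (hP.image _) (by rintro _ ⟨p, hp, rfl⟩; exact h p hp)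

lemma exists_ne_dist_le_two_mul_of_card_lt {ι : Type*} {C : Finset α} (hC : C.Nonempty)
    {s : Finset ι} (hcard : C.card < s.card) {x : ι → α} {R : ℝ}
    (hx : ∀ i ∈ s, infDist (x i) C ≤ R) : ∃ i ∈ s, ∃ j ∈ s, i ≠ j ∧ dist (x i) (x j) ≤ 2 * R := by
  have nearest : ∀ i, ∃ q ∈ C, infDist (x i) C = dist (x i) q := fun i =>
    C.finite_toSet.isCompact.exists_infDist_eq_dist hC (x i)
  choose f hfC hf using nearest
  obtain ⟨i, hi, j, hj, hij, hfij⟩ :=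
    Finset.exists_ne_map_eq_of_card_lt_of_maps_to hcard (fun i _ => hfC i)
  refine ⟨i, hi, j, hj, hij, ?_⟩
  calc dist (x i) (x j) ≤ dist (x i) (f i) + dist (f j) (x j) := hfij ▸ dist_triangle _ _ _
    _ = infDist (x i) C + infDist (x j) C := by rw [hf i, hf j, dist_comm (f j)]
    _ ≤ 2 * R := by linarith [hx i hi, hx j hj]

section Greedy

variable {P : Set α} {c : ℕ → α}
  (hgreedy : ∀ i, 1 ≤ i → ∀ p ∈ P, infDist p (c '' Iio i) ≤ infDist (c i) (c '' Iio i))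
include hgreedy

lemma infDist_greedy_le_dist {k : ℕ} (hck : c k ∈ P) {i j : ℕ} (hij : i < j) (hjk : j ≤ k) :
    infDist (c k) (c '' Iio k) ≤ dist (c i) (c j) :=
  calc infDist (c k) (c '' Iio k) ≤ infDist (c k) (c '' Iio j) :=
        infDist_le_infDist_of_subset (image_mono (Iio_subset_Iio hjk)) ⟨c 0, 0, Nat.zero_lt_of_lt hij, rfl⟩
    _ ≤ infDist (c j) (c '' Iio j) := hgreedy j (by omega) (c k) hck
    _ ≤ dist (c j) (c i) := infDist_le_dist_of_mem ⟨i, hij, rfl⟩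
    _ = dist (c i) (c j) := dist_comm _ _

lemma infDist_greedy_le_two_mul_coverRadius (hP : P.Finite) (hcP : ∀ i, c i ∈ P) {k : ℕ}
    (hk : 1 ≤ k) {C : Finset α} (hC : C.card = k) :
    infDist (c k) (c '' Iio k) ≤ 2 * coverRadius P C := by
  obtain ⟨i, hi, j, hj, hij, hdist⟩ :=
    exists_ne_dist_le_two_mul_of_card_lt (Finset.card_pos.mp (by omega))
      (by simp [hC] : C.card < (Finset.range (k + 1)).card)
      (fun i _ => infDist_le_coverRadius hP C (hcP i))
  rw [Finset.mem_range, Nat.lt_succ_iff] at hi hj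
  refine le_trans ?_ hdist
  rcases hij.lt_or_gt with h | h
  · exact infDist_greedy_le_dist hgreedy (hcP k) h hj
  · exact dist_comm (c i) (c j) ▸ infDist_greedy_le_dist hgreedy (hcP k) h hi

end Greedy

theorem greedy_two_approx_general {d : ℕ} (P : Finset (EuclideanSpace ℝ (Fin d)))
    (k : ℕ) (hk1 : 1 ≤ k) (hk2 : k ≤ P.card)
    (c : ℕ → EuclideanSpace ℝ (Fin d)) (hcP : ∀ i, c i ∈ P)
    (hgreedy : ∀ i : ℕ, 1 ≤ i → ∀ p ∈ P,
      Metric.infDist p (c '' Set.Iio i) ≤ Metric.infDist (c i) (c '' Set.Iio i))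
    (r : ℕ → ℝ)
    (hr : ∀ i, r i = sSup ((fun p => Metric.infDist p (c '' Set.Iio i)) '' (P : Set _))) :
    r k ≤ 2 * sInf {R : ℝ | ∃ C : Finset (EuclideanSpace ℝ (Fin d)), C ⊆ P ∧
      C.card = k ∧ R = sSup ((fun p => Metric.infDist p (C : Set (EuclideanSpace ℝ (Fin d)))) '' (P : Set _))} := by
  have hrk : r k ≤ infDist (c k) (c '' Iio k) := by
    rw [hr k]
    exact coverRadius_le ⟨c 0, hcP 0⟩ (hgreedy k hk1)
  obtain ⟨C₀, hC₀P, hC₀⟩ := Finset.exists_subset_card_eq hk2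
  refine hrk.trans ?_
  rw [← div_le_iff₀' two_pos]
  refine le_csInf ⟨_, C₀, hC₀P, hC₀, rfl⟩ ?_
  rintro _ ⟨C, -, hC, rfl⟩
  rw [div_le_iff₀' two_pos]
  exact infDist_greedy_le_two_mul_coverRadius hgreedy P.finite_toSet hcP hk1 hC

/-- the greedy k-center algorithm is a 2-approximation:
`r_k ≤ 2 · r_opt(k)`, where `r_opt(k)` is the minimum over `k`-subsets `C ⊆ P` of
`max_{p ∈ P} dist(p, C)`. -/
theorem greedy_two_approx {d : ℕ} (P : Finset (EuclideanSpace ℝ (Fin d)))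
    (hP : P.Nonempty) (k : ℕ) (hk1 : 1 ≤ k) (hk2 : k ≤ P.card)
    (c : ℕ → EuclideanSpace ℝ (Fin d)) (hcP : ∀ i, c i ∈ P)
    (hgreedy : ∀ i : ℕ, 1 ≤ i → ∀ p ∈ P,
      Metric.infDist p (c '' Set.Iio i) ≤ Metric.infDist (c i) (c '' Set.Iio i))
    (r : ℕ → ℝ)
    (hr : ∀ i, r i = sSup ((fun p => Metric.infDist p (c '' Set.Iio i)) '' (P : Set _))) :
    r k ≤ 2 * sInf {R : ℝ | ∃ C : Finset (EuclideanSpace ℝ (Fin d)), C ⊆ P ∧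
      C.card = k ∧ R = sSup ((fun p => Metric.infDist p (C : Set (EuclideanSpace ℝ (Fin d)))) '' (P : Set _))} :=
  greedy_two_approx_general P k hk1 hk2 c hcP hgreedy r hr
end

section
/- For any constant c ≥ 1 and finite P ⊆ ℝ^d, there is a constant α depending only on d such that r_{opt}(⌈α·c^d·k⌉) ≤ r_{opt}(k)/c, where r_{opt}(m) is the optimal m-center clustering radius of P. -/
/-- The covering radius of `P` by the center set `C`. -/
noncomputable def covRad {d : ℕ} (P C : Set (EuclideanSpace ℝ (Fin d))) : ℝ :=
  sSup ((fun p => Metric.infDist p C) '' P)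

/-- The optimal `m`-center clustering radius of the finite set `P`
(centers chosen from `P`, at most `m` of them). -/
noncomputable def ropt {d : ℕ} (P : Finset (EuclideanSpace ℝ (Fin d))) (m : ℕ) : ℝ :=
  sInf {R : ℝ | ∃ C : Finset (EuclideanSpace ℝ (Fin d)),
    C ⊆ P ∧ C.Nonempty ∧ C.card ≤ m ∧ R = covRad (P : Set (EuclideanSpace ℝ (Fin d))) (C : Set (EuclideanSpace ℝ (Fin d)))}

open Metric MeasureTheory Finset ENNReal

section Helpers
variable {d : ℕ}


lemma covRad_le {P : Finset (EuclideanSpace ℝ (Fin d))} {C : Set (EuclideanSpace ℝ (Fin d))}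
    (hP : P.Nonempty) {r : ℝ} (h : ∀ p ∈ P, infDist p C ≤ r) :
    covRad (P : Set (EuclideanSpace ℝ (Fin d))) C ≤ r := by
  apply csSup_le (hP.to_set.image (fun p => infDist p C))
  rintro x ⟨p, hp, rfl⟩
  exact h p (by simpa using hp)

lemma le_covRad {P : Finset (EuclideanSpace ℝ (Fin d))} {C : Set (EuclideanSpace ℝ (Fin d))}
    {p : EuclideanSpace ℝ (Fin d)} (hp : p ∈ P) :
    infDist p C ≤ covRad (P : Set (EuclideanSpace ℝ (Fin d))) C :=
  le_csSup ((P.finite_toSet.image _).bddAbove) ⟨p, by simpa using hp, rfl⟩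

lemma roptSet_finite (P : Finset (EuclideanSpace ℝ (Fin d))) (m : ℕ) :
    {R : ℝ | ∃ C : Finset (EuclideanSpace ℝ (Fin d)),
      C ⊆ P ∧ C.Nonempty ∧ C.card ≤ m ∧ R = covRad (P : Set (EuclideanSpace ℝ (Fin d))) (C : Set (EuclideanSpace ℝ (Fin d)))}.Finite := by
  apply Set.Finite.subset ((P.powerset.finite_toSet).image
    (fun C : Finset (EuclideanSpace ℝ (Fin d)) =>
      covRad (P : Set (EuclideanSpace ℝ (Fin d))) (C : Set (EuclideanSpace ℝ (Fin d)))))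
  rintro R ⟨C, hCP, _, _, rfl⟩
  exact ⟨C, by simpa using hCP, rfl⟩

lemma roptSet_nonempty (P : Finset (EuclideanSpace ℝ (Fin d))) (hP : P.Nonempty) {m : ℕ} (hm : 1 ≤ m) :
    {R : ℝ | ∃ C : Finset (EuclideanSpace ℝ (Fin d)),
      C ⊆ P ∧ C.Nonempty ∧ C.card ≤ m ∧ R = covRad (P : Set (EuclideanSpace ℝ (Fin d))) (C : Set (EuclideanSpace ℝ (Fin d)))}.Nonempty := by
  obtain ⟨p, hp⟩ := hP
  exact ⟨_, {p}, by simpa using hp, singleton_nonempty p, by simpa using hm, rfl⟩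

lemma ropt_le (P : Finset (EuclideanSpace ℝ (Fin d))) {m : ℕ} {C : Finset (EuclideanSpace ℝ (Fin d))}
    (hC : C ⊆ P) (hne : C.Nonempty) (hcard : C.card ≤ m) :
    ropt P m ≤ covRad (P : Set (EuclideanSpace ℝ (Fin d))) (C : Set (EuclideanSpace ℝ (Fin d))) :=
  csInf_le (roptSet_finite P m).bddBelow ⟨C, hC, hne, hcard, rfl⟩

lemma ropt_spec (P : Finset (EuclideanSpace ℝ (Fin d))) (hP : P.Nonempty) {m : ℕ} (hm : 1 ≤ m) :
    ∃ C : Finset (EuclideanSpace ℝ (Fin d)), C ⊆ P ∧ C.Nonempty ∧ C.card ≤ m ∧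
      ropt P m = covRad (P : Set (EuclideanSpace ℝ (Fin d))) (C : Set (EuclideanSpace ℝ (Fin d))) :=
  (roptSet_nonempty P hP hm).csInf_mem (roptSet_finite P m)

lemma ropt_anti (P : Finset (EuclideanSpace ℝ (Fin d))) (hP : P.Nonempty) {k m : ℕ}
    (hk : 1 ≤ k) (h : k ≤ m) : ropt P m ≤ ropt P k := by
  apply csInf_le_csInf (roptSet_finite P m).bddBelow (roptSet_nonempty P hP hk)
  rintro R ⟨C, hCP, hne, hcard, rfl⟩
  exact ⟨C, hCP, hne, hcard.trans h, rfl⟩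



lemma pack {d : ℕ} (T : Finset (EuclideanSpace ℝ (Fin d))) (x : EuclideanSpace ℝ (Fin d))
    {R δ : ℝ} (hR : 0 < R) (hδ : 0 < δ)
    (hT : ∀ s ∈ T, dist s x ≤ R)
    (hsep : ∀ s ∈ T, ∀ t ∈ T, s ≠ t → δ < dist s t) :
    (T.card : ℝ) ≤ ((2 * R + δ) / δ) ^ d := by
  set V := volume (ball (0 : EuclideanSpace ℝ (Fin d)) 1) with hV
  have hδ2 : (0:ℝ) ≤ δ / 2 := by linarith
  have hRδ : (0:ℝ) ≤ R + δ / 2 := by linarith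
  have hdisj : (T : Set (EuclideanSpace ℝ (Fin d))).PairwiseDisjoint
      (fun s => closedBall s (δ / 2)) := by
    intro s hs t ht hst
    exact closedBall_disjoint_closedBall (by
      have := hsep s (by simpa using hs) t (by simpa using ht) hst; linarith)
  have hsum : volume (⋃ s ∈ T, closedBall s (δ / 2))
      = ∑ s ∈ T, volume (closedBall s (δ / 2)) :=
    measure_biUnion_finset hdisj (fun s _ => measurableSet_closedBall)
  have hsub : (⋃ s ∈ T, closedBall s (δ / 2)) ⊆ closedBall x (R + δ / 2) := by
    intro y hy
    simp only [Set.mem_iUnion] at hy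
    obtain ⟨s, hs, hy⟩ := hy
    rw [mem_closedBall] at *
    calc dist y x ≤ dist y s + dist s x := dist_triangle _ _ _
      _ ≤ δ / 2 + R := add_le_add hy (hT s hs)
      _ = R + δ / 2 := by ring
  have key : (T.card : ℝ≥0∞) * (ENNReal.ofReal ((δ/2) ^ d) * V)
      ≤ ENNReal.ofReal ((R + δ/2) ^ d) * V := by
    calc (T.card : ℝ≥0∞) * (ENNReal.ofReal ((δ/2) ^ d) * V)
        = ∑ s ∈ T, volume (closedBall s (δ / 2)) := by
          rw [Finset.sum_congr rfl (fun s _ => ?_), Finset.sum_const, nsmul_eq_mul]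
          rw [Measure.addHaar_closedBall volume s hδ2, finrank_euclideanSpace_fin]
      _ = volume (⋃ s ∈ T, closedBall s (δ / 2)) := hsum.symm
      _ ≤ volume (closedBall x (R + δ / 2)) := measure_mono hsub
      _ = ENNReal.ofReal ((R + δ/2) ^ d) * V := by
          rw [Measure.addHaar_closedBall volume x hRδ, finrank_euclideanSpace_fin]
  have hV0 : V ≠ 0 := (measure_ball_pos volume 0 one_pos).ne'
  have hVt : V ≠ ⊤ := measure_ball_lt_top.ne
  rw [← mul_assoc, ENNReal.mul_le_mul_iff_left hV0 hVt] at key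
  have key2 : ENNReal.ofReal ((T.card : ℝ) * (δ/2) ^ d) ≤ ENNReal.ofReal ((R + δ/2) ^ d) := by
    rwa [ENNReal.ofReal_mul (by positivity), ENNReal.ofReal_natCast]
  have key3 : (T.card : ℝ) * (δ/2) ^ d ≤ (R + δ/2) ^ d :=
    (ENNReal.ofReal_le_ofReal_iff (by positivity)).mp key2
  have h2 : (0:ℝ) < (δ/2) ^ d := by positivity
  calc (T.card : ℝ) ≤ (R + δ/2) ^ d / (δ/2) ^ d := (le_div_iff₀ h2).mpr key3
    _ = ((R + δ/2) / (δ/2)) ^ d := (div_pow _ _ _).symm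
    _ = ((2 * R + δ) / δ) ^ d := by
        congr 1
        rw [div_eq_div_iff (by positivity) hδ.ne']
        ring


end Helpers

/-- for any `c ≥ 1` there is a constant `α` depending only on `d` with
`r_opt(⌈α·c^d·k⌉) ≤ r_opt(k)/c`. -/
theorem ropt_refine (d : ℕ) : ∃ α : ℝ, 0 < α ∧
    ∀ P : Finset (EuclideanSpace ℝ (Fin d)), P.Nonempty →
      ∀ c : ℝ, 1 ≤ c → ∀ k : ℕ, 1 ≤ k →
        ropt P ⌈α * c ^ d * (k : ℝ)⌉₊ ≤ ropt P k / c := by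
  refine ⟨3 ^ d, by positivity, ?_⟩
  intro P hP c hc k hk
  classical
  have hc0 : (0:ℝ) < c := lt_of_lt_of_le one_pos hc
  set m := ⌈(3:ℝ) ^ d * c ^ d * (k : ℝ)⌉₊ with hmdef
  have hone : (1:ℝ) ≤ 3 ^ d * c ^ d := by
    have h1 : (1:ℝ) ≤ 3 ^ d := one_le_pow₀ (by norm_num)
    have h2 : (1:ℝ) ≤ c ^ d := one_le_pow₀ hc
    nlinarith
  have hkR : (k:ℝ) ≤ 3 ^ d * c ^ d * (k:ℝ) := by nlinarith [show (0:ℝ) ≤ (k:ℝ) from Nat.cast_nonneg k]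
  have hkm : k ≤ m := by
    exact Nat.cast_le (α := ℝ) |>.mp (hkR.trans (Nat.le_ceil _))
  obtain ⟨C₀, hC₀P, hC₀ne, hC₀card, hrdef⟩ := ropt_spec P hP hk
  set r := ropt P k with hr
  obtain ⟨p₀, hp₀⟩ := id hP
  have hr0 : 0 ≤ r := by
    rw [hrdef]
    exact le_trans infDist_nonneg (le_covRad hp₀)
  rcases eq_or_lt_of_le hr0 with hr0' | hrpos
  · have h1 : ropt P m ≤ r := ropt_anti P hP hk hkm
    rw [← hr0', zero_div] at *
    linarith
  · set δ := r / c with hδdef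
    have hδ : 0 < δ := div_pos hrpos hc0
    -- maximal separated subset
    set F := P.powerset.filter
      (fun S => ∀ s ∈ S, ∀ t ∈ S, s ≠ t → δ < dist s t) with hF
    have hFne : F.Nonempty := ⟨∅, by simp [hF]⟩
    obtain ⟨S, hSF, hSmax⟩ := F.exists_max_image (fun S => S.card) hFne
    rw [hF, Finset.mem_filter, Finset.mem_powerset] at hSF
    obtain ⟨hSP, hSsep⟩ := hSF
    have hcover : ∀ p ∈ P, ∃ s ∈ S, dist p s ≤ δ := by
      by_contra hcon
      push_neg at hcon
      obtain ⟨p, hpP, hpfar⟩ := hcon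
      have hpS : p ∉ S := by
        intro h
        have := hpfar p h
        rw [dist_self] at this
        linarith
      have hins : insert p S ∈ F := by
        rw [hF, Finset.mem_filter, Finset.mem_powerset]
        refine ⟨Finset.insert_subset hpP hSP, ?_⟩
        intro s hs t ht hst
        rcases Finset.mem_insert.mp hs with hsp | hs' <;>
          rcases Finset.mem_insert.mp ht with htp | ht'
        · exact absurd (hsp.trans htp.symm) hst
        · subst hsp; exact hpfar t ht'
        · subst htp; rw [dist_comm]; exact hpfar s hs'
        · exact hSsep s hs' t ht' hst
      have h9 := hSmax _ hins
      rw [Finset.card_insert_of_notMem hpS] at h9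
      omega
    have hSne : S.Nonempty := by
      obtain ⟨s, hs, _⟩ := hcover p₀ hp₀
      exact ⟨s, hs⟩
    have hcov : covRad (P : Set (EuclideanSpace ℝ (Fin d))) (S : Set (EuclideanSpace ℝ (Fin d))) ≤ δ := by
      apply covRad_le hP
      intro p hp
      obtain ⟨s, hs, hds⟩ := hcover p hp
      exact (infDist_le_dist_of_mem (Finset.mem_coe.mpr hs)).trans hds
    -- cardinality bound
    have hnear : ∀ p ∈ P, ∃ c₀ ∈ C₀, dist p c₀ ≤ r := by
      intro p hp
      obtain ⟨c₀, hc₀, heq⟩ := (C₀.finite_toSet.isCompact).exists_infDist_eq_dist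
        (by exact_mod_cast hC₀ne.to_set) p
      refine ⟨c₀, by exact_mod_cast hc₀, ?_⟩
      rw [← heq, hrdef]
      exact le_covRad hp
    have hsub : S ⊆ C₀.biUnion (fun c₀ => S.filter (fun s => dist s c₀ ≤ r)) := by
      intro s hs
      obtain ⟨c₀, hc₀, hle⟩ := hnear s (hSP hs)
      exact Finset.mem_biUnion.mpr ⟨c₀, hc₀, Finset.mem_filter.mpr ⟨hs, hle⟩⟩
    have hball : ∀ c₀ : EuclideanSpace ℝ (Fin d),
        ((S.filter (fun s => dist s c₀ ≤ r)).card : ℝ) ≤ (2 * c + 1) ^ d := by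
      intro c₀
      have := pack (S.filter (fun s => dist s c₀ ≤ r)) c₀ hrpos hδ
        (fun s hs => (Finset.mem_filter.mp hs).2)
        (fun s hs t ht hst => hSsep s (Finset.mem_filter.mp hs).1 t (Finset.mem_filter.mp ht).1 hst)
      have heq : (2 * r + δ) / δ = 2 * c + 1 := by
        rw [hδdef]
        field_simp
      rwa [heq] at this
    have hcard : (S.card : ℝ) ≤ 3 ^ d * c ^ d * (k:ℝ) := by
      have h1 : S.card ≤ ∑ c₀ ∈ C₀, (S.filter (fun s => dist s c₀ ≤ r)).card :=
        (Finset.card_le_card hsub).trans (Finset.card_biUnion_le)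
      have h2 : (S.card : ℝ) ≤ ∑ c₀ ∈ C₀, ((S.filter (fun s => dist s c₀ ≤ r)).card : ℝ) := by
        exact_mod_cast h1
      have h3 : (∑ c₀ ∈ C₀, ((S.filter (fun s => dist s c₀ ≤ r)).card : ℝ))
          ≤ (C₀.card : ℝ) * (2 * c + 1) ^ d := by
        calc _ ≤ ∑ _c₀ ∈ C₀, (2 * c + 1) ^ d := Finset.sum_le_sum (fun c₀ _ => hball c₀)
          _ = (C₀.card : ℝ) * (2 * c + 1) ^ d := by rw [Finset.sum_const, nsmul_eq_mul]
      have h4 : ((2:ℝ) * c + 1) ^ d ≤ (3 * c) ^ d :=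
        pow_le_pow_left₀ (by linarith) (by linarith) d
      have h5 : ((3:ℝ) * c) ^ d = 3 ^ d * c ^ d := mul_pow 3 c d
      have h6 : (C₀.card : ℝ) ≤ (k : ℝ) := by exact_mod_cast hC₀card
      have h7 : (0:ℝ) ≤ (2 * c + 1) ^ d := by positivity
      have h8 : (1:ℝ) ≤ (k:ℝ) := by exact_mod_cast hk
      nlinarith
    have hScard : S.card ≤ m := by
      exact Nat.cast_le (α := ℝ) |>.mp (hcard.trans (Nat.le_ceil _))
    exact (ropt_le P hSP hSne hScard).trans hcov
end

section
/- In the convex-hull membership iteration, if the right-angle step is performed with ‖p_{i-1} − q‖ > εΔ and ‖p_{i-1} − z_i‖ ≤ Δ, and the projection z_i' of z_i onto the ray from p_{i-1} through q lies beyond q, then ‖q − p_i‖ < (1 − ε²/2)·‖q − p_{i-1}‖, where p_i is the orthogonal projection of q onto the segment p_{i-1}z_i. -/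
open scoped RealInnerProductSpace

set_option maxHeartbeats 1000000 in
/-- one step of the convex-hull membership iteration contracts the
distance to the query by a factor `(1 - ε²/2)`. -/
theorem ch_step_contraction {d : ℕ} (q p z pi : EuclideanSpace ℝ (Fin d)) (ε Δ : ℝ)
    (hε0 : 0 < ε) (hε1 : ε ≤ 1) (hΔ : 0 < Δ)
    (hfar : ε * Δ < dist p q) (hdiam : dist p z ≤ Δ)
    (hbeyond : ‖q - p‖ ^ 2 ≤ ⟪z - p, q - p⟫)
    (hpiMem : pi ∈ segment ℝ p z)
    (hpiMin : ∀ w ∈ segment ℝ p z, dist q pi ≤ dist q w) :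
    dist q pi < (1 - ε ^ 2 / 2) * dist q p := by
  set u : EuclideanSpace ℝ (Fin d) := z - p with hu
  set v : EuclideanSpace ℝ (Fin d) := q - p with hv
  have hRv : dist p q = ‖v‖ := by rw [dist_eq_norm, norm_sub_rev]
  have hvpos : 0 < ‖v‖ := lt_trans (by positivity) (hRv ▸ hfar)
  have huΔ : ‖u‖ ≤ Δ := by rw [hu, ← norm_sub_rev, ← dist_eq_norm]; exact hdiam
  have hiuv : ‖v‖ ^ 2 ≤ ⟪u, v⟫ := hbeyond
  have hle : ‖v‖ ≤ ‖u‖ := by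
    have h1 : ⟪u, v⟫ ≤ ‖u‖ * ‖v‖ := real_inner_le_norm u v
    nlinarith
  have hupos : 0 < ‖u‖ := lt_of_lt_of_le hvpos hle
  set t : ℝ := ‖v‖ ^ 2 / ‖u‖ ^ 2 with ht
  have ht0 : 0 < t := by positivity
  have ht1 : t ≤ 1 := by
    rw [ht, div_le_one (by positivity)]
    nlinarith
  set w : EuclideanSpace ℝ (Fin d) := p + t • u with hw
  have hwmem : w ∈ segment ℝ p z := by
    refine ⟨1 - t, t, by linarith, le_of_lt ht0, by ring, ?_⟩
    rw [hw, hu]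
    module
  have hqw : q - w = v - t • u := by rw [hw, hv]; abel
  have hsq : ‖q - w‖ ^ 2 = ‖v‖ ^ 2 - 2 * t * ⟪u, v⟫ + t ^ 2 * ‖u‖ ^ 2 := by
    rw [hqw, norm_sub_sq_real, real_inner_smul_right, real_inner_comm, norm_smul,
      Real.norm_eq_abs, abs_of_pos ht0]
    ring
  have hεv : ε * ‖u‖ < ‖v‖ := by
    calc ε * ‖u‖ ≤ ε * Δ := by nlinarith
    _ < ‖v‖ := hRv ▸ hfar
  have hbound : ‖q - w‖ ^ 2 < (1 - ε ^ 2) * ‖v‖ ^ 2 := by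
    have ht2 : t ^ 2 * ‖u‖ ^ 2 = ‖v‖ ^ 2 * t := by
      rw [ht]; field_simp
    have hkey : t > ε ^ 2 := by
      rw [ht, gt_iff_lt, lt_div_iff₀ (by positivity)]
      nlinarith [mul_pos hε0 hupos, hεv]
    rw [hsq]
    nlinarith [mul_le_mul_of_nonneg_left hiuv (le_of_lt ht0),
      mul_pos (sub_pos.mpr hkey) (mul_pos hvpos hvpos)]
  have hrhs : 0 < (1 - ε ^ 2 / 2) * ‖v‖ := by nlinarith
  have hqwlt : ‖q - w‖ < (1 - ε ^ 2 / 2) * ‖v‖ := by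
    have : ‖q - w‖ ^ 2 < ((1 - ε ^ 2 / 2) * ‖v‖) ^ 2 := by nlinarith [sq_nonneg (ε ^ 2 * ‖v‖)]
    exact lt_of_pow_lt_pow_left₀ 2 (le_of_lt hrhs) this
  calc dist q pi ≤ dist q w := hpiMin w hwmem
    _ = ‖q - w‖ := dist_eq_norm q w
    _ < (1 - ε ^ 2 / 2) * ‖v‖ := hqwlt
    _ = (1 - ε ^ 2 / 2) * dist q p := by rw [dist_eq_norm]
end

section
/- If a sequence of distances d_0, d_1, d_2, … satisfies d_0 ≤ Δ and d_i < (1 − d_{i-1}²/(2Δ²))·d_{i-1} for all i (as long as d_{i-1} > εΔ), then d_i ≤ εΔ for some i = O(1/ε²); more precisely after at most C/ε² steps for an absolute constant C. -/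
set_option maxHeartbeats 1000000 in
/-- the epoch-based convergence bound: a sequence with `d 0 ≤ Δ`
that contracts by `(1 - d_{i-1}²/(2Δ²))` while `d_{i-1} > εΔ` drops below `εΔ`
within `C/ε²` steps, for an absolute constant `C`. -/
theorem epoch_convergence : ∃ C : ℝ, 0 < C ∧
    ∀ (ε Δ : ℝ) (d : ℕ → ℝ), 0 < ε → ε ≤ 1 → 0 < Δ →
      (∀ i, 0 ≤ d i) → d 0 ≤ Δ →
      (∀ i, ε * Δ < d i → d (i + 1) < (1 - (d i) ^ 2 / (2 * Δ ^ 2)) * d i) →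
      ∃ i : ℕ, (i : ℝ) ≤ C / ε ^ 2 ∧ d i ≤ ε * Δ := by
  refine ⟨2, by norm_num, fun ε Δ d hε hε1 hΔ hd h0 hstep => ?_⟩
  by_contra hcon
  push_neg at hcon
  set N : ℕ := ⌈1 / ε ^ 2⌉₊ with hNdef
  have hε2 : (0:ℝ) < ε ^ 2 := by positivity
  have hle1 : (1:ℝ) ≤ 1 / ε ^ 2 := by
    rw [le_div_iff₀ hε2]; nlinarith
  have htwo : (2:ℝ) / ε ^ 2 = 2 * (1 / ε ^ 2) := by ring
  have hNup : (N : ℝ) ≤ 2 / ε ^ 2 := by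
    have h1 : (N : ℝ) < 1 / ε ^ 2 + 1 := Nat.ceil_lt_add_one (by positivity)
    rw [htwo]; linarith
  have hNlow : (1 : ℝ) / ε ^ 2 ≤ N := Nat.le_ceil _
  have hbig : ∀ i : ℕ, i ≤ N → ε * Δ < d i := by
    intro i hi
    apply hcon
    calc (i : ℝ) ≤ N := by exact_mod_cast hi
      _ ≤ 2 / ε ^ 2 := hNup
  have key : ∀ i : ℕ, i ≤ N → (1 + (i : ℝ)) * (d i) ^ 2 ≤ Δ ^ 2 := by
    intro i
    induction i with
    | zero =>
      intro _
      push_cast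
      nlinarith [mul_le_mul h0 h0 (hd 0) hΔ.le]
    | succ i ih =>
      intro hiN
      have hiN' : i ≤ N := Nat.le_of_succ_le hiN
      have hIH := ih hiN'
      have hdi := hbig i hiN'
      have hlt := hstep i hdi
      have ha : 0 ≤ d i := hd i
      have ha0 : 0 < d i := lt_trans (mul_pos hε hΔ) hdi
      have hb : 0 ≤ d (i + 1) := hd (i + 1)
      have hD2 : (0:ℝ) < Δ ^ 2 := by positivity
      have hD4 : (0:ℝ) < Δ ^ 4 := by positivity
      have hi0 : (0:ℝ) ≤ (i : ℝ) := Nat.cast_nonneg i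
      have haD : (d i) ^ 2 ≤ Δ ^ 2 := by nlinarith [sq_nonneg (d i)]
      have h1 : d (i + 1) * (2 * Δ ^ 2) < 2 * Δ ^ 2 * d i - (d i) ^ 3 := by
        have h := mul_lt_mul_of_pos_right hlt (show (0:ℝ) < 2 * Δ ^ 2 by positivity)
        have hne : (2 : ℝ) * Δ ^ 2 ≠ 0 := by positivity
        field_simp at h
        nlinarith [h]
      have hR : 0 < 2 * Δ ^ 2 * d i - (d i) ^ 3 := by
        nlinarith [mul_pos ha0 hD2, mul_le_mul_of_nonneg_left haD ha]
      have h2 : d (i + 1) ^ 2 * (4 * Δ ^ 4) ≤ (2 * Δ ^ 2 * d i - (d i) ^ 3) ^ 2 := by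
        nlinarith [mul_pos (sub_pos.mpr h1)
          (show (0:ℝ) < 2 * Δ ^ 2 * d i - (d i) ^ 3 + d (i + 1) * (2 * Δ ^ 2) by
            nlinarith [mul_nonneg hb hD2.le])]
      have hlin : (2 + (i : ℝ)) * (d i) ^ 2 ≤ Δ ^ 2 + (d i) ^ 2 := by nlinarith
      have h3 : (2 + (i : ℝ)) * (2 * Δ ^ 2 * d i - (d i) ^ 3) ^ 2 ≤ 4 * Δ ^ 6 := by
        nlinarith [mul_le_mul_of_nonneg_right hlin (sq_nonneg (2 * Δ ^ 2 - (d i) ^ 2)),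
          mul_nonneg (sq_nonneg ((d i) ^ 2)) (show (0:ℝ) ≤ 3 * Δ ^ 2 - (d i) ^ 2 by linarith)]
      have h4 : (2 + (i : ℝ)) * (d (i + 1) ^ 2 * (4 * Δ ^ 4)) ≤ 4 * Δ ^ 6 :=
        le_trans (mul_le_mul_of_nonneg_left h2 (by linarith)) h3
      push_cast
      nlinarith [h4, hD4, mul_nonneg (mul_nonneg (show (0:ℝ) ≤ 2 + (i:ℝ) by linarith)
        (sq_nonneg (d (i + 1)))) hD4.le]
  have hfin := key N le_rfl
  have hdN := hbig N le_rfl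
  have hεΔ : 0 < ε * Δ := mul_pos hε hΔ
  have hD2 : (0:ℝ) < Δ ^ 2 := by positivity
  have hsq : (ε * Δ) ^ 2 < (d N) ^ 2 := by nlinarith
  have hN1 : (1:ℝ) ≤ ε ^ 2 * N := by
    rw [div_le_iff₀ hε2] at hNlow; linarith
  nlinarith [mul_pos hε2 hD2,
    mul_lt_mul_of_pos_left hsq (show (0:ℝ) < 1 + (N:ℝ) by positivity),
    (Nat.cast_nonneg N : (0:ℝ) ≤ N), mul_le_mul_of_nonneg_right hN1 hD2.le]
end

section
/- Approximate extremal query via ANN: let ε ∈ (0,1], set δ = ε²/(32−ε)², τ = 32Δ'/ε, where Δ ≤ Δ' ≤ 2Δ and Δ = diam(P). Let q be a point at distance τ from a point p ∈ conv(P) along direction v (unit vector), and let z be a (1+δ)-ANN of q in P. Then for all y ∈ P, ⟨v, y⟩ ≤ ⟨v, z⟩ + εΔ. -/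
open scoped RealInnerProductSpace

/-!
Write `A = ⟪v, q - y⟫ = τ + ⟪v, p - y⟫`. Since `p` and `y` lie in `conv(P)`, which has diameter
`Δ`, moving from `p` to `q` along `v` changes only the `v`-component, so
`‖q - y‖² ≤ A² + Δ²`; and `τ = 32Δ'/ε` makes `εA ∈ [31Δ, 65Δ]`, hence `‖q - y‖ ≤ A + εΔ/62`.
The ANN property gives `⟪v, q - z⟫ ≤ ‖q - z‖ ≤ (1 + δ)‖q - y‖`, and the choice
`δ ≤ ε²/31²` absorbs the factor `1 + δ` into the slack `εΔ`.
-/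

lemma dist_le_diam_of_mem_convexHull {E : Type*} [SeminormedAddCommGroup E] [NormedSpace ℝ E]
    {s : Set E} (hs : Bornology.IsBounded s) {x y : E} (hx : x ∈ convexHull ℝ s)
    (hy : y ∈ convexHull ℝ s) : dist x y ≤ Metric.diam s :=
  convexHull_diam s ▸ Metric.dist_le_diam_of_mem (isBounded_convexHull.2 hs) hx hy

section UnitVector

variable {E : Type*} [NormedAddCommGroup E] [InnerProductSpace ℝ E] {v : E}

lemma inner_add_smul_of_norm_eq_one (hv : ‖v‖ = 1) (w : E) (t : ℝ) :
    ⟪v, w + t • v⟫ = ⟪v, w⟫ + t := by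
  rw [inner_add_right, real_inner_smul_right, real_inner_self_eq_norm_sq, hv]
  ring

lemma norm_add_smul_sq_le_inner_sq_add (hv : ‖v‖ = 1) (w : E) (t : ℝ) :
    ‖w + t • v‖ ^ 2 ≤ ⟪v, w + t • v⟫ ^ 2 + ‖w‖ ^ 2 := by
  have hnorm : ‖w + t • v‖ ^ 2 = ‖w‖ ^ 2 + 2 * t * ⟪v, w⟫ + t ^ 2 := by
    rw [norm_add_sq_real, real_inner_smul_right, norm_smul, hv, real_inner_comm,
      Real.norm_eq_abs, mul_one, sq_abs]
    ring
  rw [hnorm, inner_add_smul_of_norm_eq_one hv]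
  nlinarith [sq_nonneg ⟪v, w⟫]

lemma inner_sub_le_mul_dist_of_dist_le_mul_infDist (hv : ‖v‖ = 1) {s : Set E} {q y z : E}
    {c : ℝ} (hc : 0 ≤ c) (hy : y ∈ s) (hz : dist q z ≤ c * Metric.infDist q s) :
    ⟪v, q - z⟫ ≤ c * dist q y :=
  calc ⟪v, q - z⟫ ≤ ‖v‖ * ‖q - z‖ := real_inner_le_norm v (q - z)
    _ = dist q z := by rw [hv, one_mul, dist_eq_norm]
    _ ≤ c * dist q y := hz.trans (by gcongr; exact Metric.infDist_le_dist_of_mem hy)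

end UnitVector

lemma one_add_mul_le_add_of_sq_le_sq_add_sq {ε Δ A δ r : ℝ} (hε0 : 0 < ε) (hε1 : ε ≤ 1)
    (hΔ : 0 < Δ) (hA1 : 31 * Δ ≤ ε * A) (hA2 : ε * A ≤ 65 * Δ) (hδ0 : 0 ≤ δ)
    (hδ : 961 * δ ≤ ε ^ 2) (hr : 0 ≤ r) (hr2 : r ^ 2 ≤ A ^ 2 + Δ ^ 2) :
    (1 + δ) * r ≤ A + ε * Δ := by
  have hA : 0 < A := pos_of_mul_pos_right (by linarith) hε0.le
  have hr' : r ≤ A + ε * Δ / 62 := by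
    refine (pow_le_pow_iff_left₀ hr (by positivity) two_ne_zero).1 ?_
    nlinarith [mul_le_mul_of_nonneg_right hA1 hΔ.le, sq_nonneg (ε * Δ)]
  have hδA : 961 * (δ * A) ≤ 65 * (ε * Δ) := by
    nlinarith [mul_le_mul_of_nonneg_right hδ hA.le, mul_le_mul_of_nonneg_left hA2 hε0.le]
  have hδε : 961 * δ ≤ ε := by nlinarith
  calc (1 + δ) * r ≤ (1 + δ) * (A + ε * Δ / 62) := by gcongr
    _ = A + ε * Δ / 62 + δ * A + δ * (ε * Δ) / 62 := by ring
    _ ≤ A + ε * Δ := by nlinarith [mul_pos hε0 hΔ]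

lemma mul_sq_div_sub_sq_le {ε : ℝ} (hε1 : ε ≤ 1) : 961 * (ε ^ 2 / (32 - ε) ^ 2) ≤ ε ^ 2 := by
  have h961 : (961 : ℝ) ≤ (32 - ε) ^ 2 := by nlinarith
  rw [mul_div_assoc', div_le_iff₀ (by linarith)]
  exact mul_comm (961 : ℝ) _ ▸ mul_le_mul_of_nonneg_left h961 (sq_nonneg ε)

theorem ann_extremal_query_general {d : ℕ} (P : Finset (EuclideanSpace ℝ (Fin d)))
    (ε Δ Δ' δ τ : ℝ) (hε0 : 0 < ε) (hε1 : ε ≤ 1)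
    (hΔ : Δ = Metric.diam (P : Set (EuclideanSpace ℝ (Fin d)))) (hΔpos : 0 < Δ)
    (hΔ'1 : Δ ≤ Δ') (hΔ'2 : Δ' ≤ 2 * Δ)
    (hδ : δ = ε ^ 2 / (32 - ε) ^ 2) (hτ : τ = 32 * Δ' / ε)
    (v p q z : EuclideanSpace ℝ (Fin d)) (hv : ‖v‖ = 1)
    (hp : p ∈ convexHull ℝ (P : Set (EuclideanSpace ℝ (Fin d))))
    (hq : q = p + τ • v)
    (hz : dist q z ≤ (1 + δ) * Metric.infDist q (P : Set (EuclideanSpace ℝ (Fin d)))) :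
    ∀ y ∈ P, ⟪v, y⟫ ≤ ⟪v, z⟫ + ε * Δ := by
  intro y hy
  have hpy : ‖p - y‖ ≤ Δ := hΔ ▸ dist_eq_norm p y ▸ dist_le_diam_of_mem_convexHull
    P.finite_toSet.isBounded hp (subset_convexHull ℝ _ hy)
  have hqy : q - y = (p - y) + τ • v := by rw [hq]; abel
  have hnorm : ‖q - y‖ ^ 2 ≤ ⟪v, q - y⟫ ^ 2 + Δ ^ 2 :=
    hqy ▸ (norm_add_smul_sq_le_inner_sq_add hv _ _).trans (by gcongr)
  have hεA : |ε * ⟪v, q - y⟫ - 32 * Δ'| ≤ Δ := by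
    have hετ : ε * τ = 32 * Δ' := by rw [hτ]; field_simp
    rw [← hετ, ← mul_sub, hqy, inner_add_smul_of_norm_eq_one hv, add_sub_cancel_right, abs_mul,
      abs_of_pos hε0]
    nlinarith [abs_nonneg ⟪v, p - y⟫, abs_real_inner_le_norm v (p - y)]
  have hδ0 : 0 ≤ δ := by rw [hδ]; positivity
  have hann := inner_sub_le_mul_dist_of_dist_le_mul_infDist hv (by linarith) hy hz
  have key := one_add_mul_le_add_of_sq_le_sq_add_sq hε0 hε1 hΔpos
    (by linarith [abs_le.1 hεA]) (by linarith [abs_le.1 hεA]) hδ0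
    (hδ ▸ mul_sq_div_sub_sq_le hε1) (norm_nonneg _) hnorm
  rw [dist_eq_norm] at hann
  rw [inner_sub_right] at hann key
  linarith

/-- approximate extremal query via ANN: with `δ = ε²/(32−ε)²`,
`τ = 32Δ'/ε`, `Δ ≤ Δ' ≤ 2Δ`, `q = p + τ·v` for `p ∈ conv(P)` and unit `v`, a
`(1+δ)`-ANN `z` of `q` in `P` is `ε`-extremal: `⟨v,y⟩ ≤ ⟨v,z⟩ + εΔ` for all `y ∈ P`. -/
theorem ann_extremal_query {d : ℕ} (P : Finset (EuclideanSpace ℝ (Fin d)))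
    (hP : P.Nonempty) (ε Δ Δ' δ τ : ℝ) (hε0 : 0 < ε) (hε1 : ε ≤ 1)
    (hΔ : Δ = Metric.diam (P : Set (EuclideanSpace ℝ (Fin d)))) (hΔpos : 0 < Δ)
    (hΔ'1 : Δ ≤ Δ') (hΔ'2 : Δ' ≤ 2 * Δ)
    (hδ : δ = ε ^ 2 / (32 - ε) ^ 2) (hτ : τ = 32 * Δ' / ε)
    (v p q z : EuclideanSpace ℝ (Fin d)) (hv : ‖v‖ = 1)
    (hp : p ∈ convexHull ℝ (P : Set (EuclideanSpace ℝ (Fin d))))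
    (hq : q = p + τ • v) (hzP : z ∈ P)
    (hz : dist q z ≤ (1 + δ) * Metric.infDist q (P : Set (EuclideanSpace ℝ (Fin d)))) :
    ∀ y ∈ P, ⟪v, y⟫ ≤ ⟪v, z⟫ + ε * Δ :=
  ann_extremal_query_general P ε Δ Δ' δ τ hε0 hε1 hΔ hΔpos hΔ'1 hΔ'2 hδ hτ v p q z hv hp hq hz
end

section
/- For every n > 0 there exists a set P of n points in ℝ^n such that for every k < n, any k-density clustering of P uses at least n − k + 1 centers. Concretely, P = {p_1,…,p_n} with p_i = √(1 − 2^{-i-1})·e_i works: for any center set C ⊆ P, letting c = p_i be the center of smallest index, every non-center point of P is strictly closer to c than to any other center. -/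
/-! With `p i = √(1 - t i) • e i` and `t` strictly decreasing in `(0, 1)`, distinct points satisfy
`‖p i - p j‖² = 2 - t i - t j`. So every non-center is strictly nearest to the center of smallest
index, whose cluster then holds that center and all `|P| - |C|` non-centers; a cluster bound `k`
forces `|C| ≥ n - k + 1`. -/

open scoped Classical

section Cluster

variable {α : Type*} [MetricSpace α] [DecidableEq α]

noncomputable def cluster (P C : Finset α) (c : α) : Finset α :=
  P.filter fun q => ∀ c' ∈ C, c' ≠ c → dist q c < dist q c'

theorem card_add_one_le_card_add_card_cluster {P C : Finset α} {c : α} (hCP : C ⊆ P)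
    (hc : c ∈ C) (hdom : ∀ q ∈ P, q ∉ C → ∀ c' ∈ C, c' ≠ c → dist q c < dist q c') :
    P.card + 1 ≤ C.card + (cluster P C c).card := by
  have hsub : insert c (P \ C) ⊆ cluster P C c := by
    intro q hq
    rcases Finset.mem_insert.mp hq with rfl | hq
    · exact Finset.mem_filter.mpr ⟨hCP hc, fun c' _ hne => by
        simpa only [dist_self] using dist_pos.mpr hne.symm⟩
    · obtain ⟨hqP, hqC⟩ := Finset.mem_sdiff.mp hq
      exact Finset.mem_filter.mpr ⟨hqP, hdom q hqP hqC⟩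
  have hc' : c ∉ P \ C := fun h => (Finset.mem_sdiff.mp h).2 hc
  have hcard := Finset.card_le_card hsub
  rw [Finset.card_insert_of_notMem hc', Finset.card_sdiff_of_subset hCP] at hcard
  have hCP_card := Finset.card_le_card hCP
  omega

end Cluster

theorem dist_smul_single_sq {ι : Type*} [Fintype ι] [DecidableEq ι] {i j : ι} (hij : i ≠ j)
    (a b : ℝ) :
    dist (a • EuclideanSpace.single i (1 : ℝ)) (b • EuclideanSpace.single j 1) ^ 2
      = a ^ 2 + b ^ 2 := by
  rw [dist_eq_norm, norm_sub_sq_real]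
  simp [norm_smul, inner_smul_left, inner_smul_right, EuclideanSpace.inner_single_left, hij]

section ScaledBasis

variable {ι : Type*} [Fintype ι] [DecidableEq ι] {t : ι → ℝ}

noncomputable def scaledBasis (t : ι → ℝ) (i : ι) : EuclideanSpace ℝ ι :=
  √(1 - t i) • EuclideanSpace.single i 1

theorem dist_scaledBasis_sq (ht : ∀ i, t i ≤ 1) {i j : ι} (hij : i ≠ j) :
    dist (scaledBasis t i) (scaledBasis t j) ^ 2 = 2 - t i - t j := by
  rw [scaledBasis, scaledBasis, dist_smul_single_sq hij, Real.sq_sqrt (sub_nonneg.mpr (ht i)),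
    Real.sq_sqrt (sub_nonneg.mpr (ht j))]
  ring

theorem scaledBasis_injective (ht : ∀ i, t i < 1) : Function.Injective (scaledBasis t) := by
  intro i j h
  by_contra hij
  have := dist_scaledBasis_sq (fun i => (ht i).le) hij
  rw [h, dist_self] at this
  linarith [ht i, ht j]

theorem dist_scaledBasis_lt (ht : ∀ i, t i ≤ 1) {i i' j : ι} (hji : j ≠ i) (hji' : j ≠ i')
    (hlt : t i' < t i) :
    dist (scaledBasis t j) (scaledBasis t i) < dist (scaledBasis t j) (scaledBasis t i') := by
  apply lt_of_pow_lt_pow_left₀ 2 dist_nonneg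
  rw [dist_scaledBasis_sq ht hji, dist_scaledBasis_sq ht hji']
  linarith

theorem exists_center_dist_scaledBasis_lt [LinearOrder ι] (ht : ∀ i, t i ≤ 1)
    (hanti : StrictAnti t) {C : Finset (EuclideanSpace ℝ ι)}
    (hC : C ⊆ Finset.univ.image (scaledBasis t)) (hne : C.Nonempty) :
    ∃ c ∈ C, ∀ q ∈ Finset.univ.image (scaledBasis t), q ∉ C → ∀ c' ∈ C, c' ≠ c →
      dist q c < dist q c' := by
  have hindex : ∀ c ∈ C, ∃ i, scaledBasis t i = c := fun c hc => by
    simpa using hC hc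
  obtain ⟨i₀, hi₀, hmin⟩ := (Finset.univ.filter fun i => scaledBasis t i ∈ C).exists_min_image id
    (by
      obtain ⟨c, hc⟩ := hne
      obtain ⟨i, rfl⟩ := hindex c hc
      exact ⟨i, Finset.mem_filter.mpr ⟨Finset.mem_univ i, hc⟩⟩)
  have hi₀C : scaledBasis t i₀ ∈ C := (Finset.mem_filter.mp hi₀).2
  refine ⟨scaledBasis t i₀, hi₀C, fun q hqP hqC c' hc' hne' => ?_⟩
  obtain ⟨j, -, rfl⟩ := Finset.mem_image.mp hqP
  obtain ⟨i, rfl⟩ := hindex c' hc'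
  have hle : i₀ ≤ i := hmin i (Finset.mem_filter.mpr ⟨Finset.mem_univ i, hc'⟩)
  have hlt : i₀ < i := hle.lt_of_ne fun h => hne' (h ▸ rfl)
  exact dist_scaledBasis_lt ht (fun h => hqC (h ▸ hi₀C)) (fun h => hqC (h ▸ hc')) (hanti hlt)

end ScaledBasis

theorem density_clustering_lower_bound_general (n : ℕ)
    (p : Fin n → EuclideanSpace ℝ (Fin n))
    (hp : ∀ i : Fin n,
      p i = Real.sqrt (1 - (2 : ℝ) ^ (-((i : ℕ) : ℤ) - 2)) • EuclideanSpace.single i 1)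
    (P : Finset (EuclideanSpace ℝ (Fin n))) (hP : P = Finset.image p Finset.univ) :
    P.card = n ∧
    ∀ k : ℕ, k < n → ∀ C ⊆ P,
      (∀ q ∈ P, ∃ c ∈ C, ∀ c' ∈ C, c' ≠ c → dist q c < dist q c') →
      (∀ c ∈ C,
        (P.filter fun q => ∀ c' ∈ C, c' ≠ c → dist q c < dist q c').card ≤ k) →
      n - k + 1 ≤ C.card := by
  set t : Fin n → ℝ := fun i => (2 : ℝ) ^ (-((i : ℕ) : ℤ) - 2)
  have ht : ∀ i, t i < 1 := fun i => zpow_lt_one_of_neg₀ (by norm_num) (by omega)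
  have hanti : StrictAnti t := fun i j hij =>
    zpow_lt_zpow_right₀ (by norm_num) (by have : (i : ℕ) < j := hij; omega)
  obtain rfl : p = scaledBasis t := funext hp
  subst hP
  have hcard : (Finset.univ.image (scaledBasis t)).card = n := by
    rw [Finset.card_image_of_injective _ (scaledBasis_injective ht), Finset.card_fin]
  refine ⟨hcard, fun k hk C hCP hnear hsize => ?_⟩
  obtain ⟨q, hq⟩ : (Finset.univ.image (scaledBasis t)).Nonempty := Finset.card_pos.mp (by omega)
  obtain ⟨c₀, hc₀, -⟩ := hnear q hq
  obtain ⟨c, hc, hdom⟩ := exists_center_dist_scaledBasis_lt (fun i => (ht i).le) hanti hCP ⟨c₀, hc₀⟩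
  have hlower := card_add_one_le_card_add_card_cluster hCP hc hdom
  have hupper : (cluster _ C c).card ≤ k := hsize c hc
  omega

/-- for every `n > 0` the set `P = {p_1,…,p_n} ⊆ ℝ^n` with
`p_i = √(1 − 2^{-i-1})·e_i` has the property that any `k`-density clustering of `P`
(for `k < n`) uses at least `n − k + 1` centers. -/
theorem density_clustering_lower_bound (n : ℕ) (hn : 0 < n)
    (p : Fin n → EuclideanSpace ℝ (Fin n))
    (hp : ∀ i : Fin n,
      p i = Real.sqrt (1 - (2 : ℝ) ^ (-((i : ℕ) : ℤ) - 2)) • EuclideanSpace.single i 1)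
    (P : Finset (EuclideanSpace ℝ (Fin n))) (hP : P = Finset.image p Finset.univ) :
    P.card = n ∧
    ∀ k : ℕ, k < n → ∀ C ⊆ P,
      (∀ q ∈ P, ∃ c ∈ C, ∀ c' ∈ C, c' ≠ c → dist q c < dist q c') →
      (∀ c ∈ C,
        (P.filter fun q => ∀ c' ∈ C, c' ≠ c → dist q c < dist q c').card ≤ k) →
      n - k + 1 ≤ C.card :=
  density_clustering_lower_bound_general n p hp P hP
end

section
/- For the point set P = {p_1,…,p_n} ⊆ ℝ^n with p_i = √(1 − 2^{-i-1})·e_i, the pairwise distances satisfy: for i < j and i' < j', dist(p_i,p_j) < dist(p_{i'},p_{j'}) if and only if (i < i') or (i = i' and j < j'). In particular, the distance from p_i to any later point is smaller than the distance between any pair of later points. -/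
private noncomputable def fexp (i : ℕ) : ℝ := (2:ℝ) ^ (-(i:ℤ) - 2)

private lemma fexp_pos (i : ℕ) : 0 < fexp i := zpow_pos (by norm_num) _

private lemma fexp_lt {i j : ℕ} (h : i < j) : fexp j < fexp i :=
  zpow_lt_zpow_right₀ (by norm_num) (by omega)

private lemma fexp_le_one (i : ℕ) : fexp i ≤ 1 :=
  zpow_le_one_of_nonpos₀ (by norm_num) (by omega)

private lemma sum_lt {i j i' j' : ℕ} (hij' : i' < j')
    (h : i < i' ∨ (i = i' ∧ j < j')) : fexp i' + fexp j' < fexp i + fexp j := by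
  rcases h with h | ⟨rfl, h⟩
  · have h1 : fexp j' < fexp i' := fexp_lt hij'
    have h2 : (2:ℝ) * fexp i' ≤ fexp i := by
      have : (2:ℝ) ^ (-(i':ℤ) - 1) ≤ (2:ℝ) ^ (-(i:ℤ) - 2) :=
        zpow_le_zpow_right₀ (by norm_num) (by omega)
      calc (2:ℝ) * fexp i' = (2:ℝ) ^ (-(i':ℤ) - 1) := by
            rw [fexp, mul_comm, ← zpow_add_one₀ (by norm_num : (2:ℝ) ≠ 0)]; ring_nf
        _ ≤ fexp i := this
    have := fexp_pos j
    linarith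
  · have := fexp_lt h
    linarith

private lemma key_iff {i j i' j' : ℕ} (hij : i < j) (hij' : i' < j') :
    fexp i' + fexp j' < fexp i + fexp j ↔ i < i' ∨ (i = i' ∧ j < j') := by
  constructor
  · intro h
    by_contra hc
    have hcase : i' < i ∨ (i' = i ∧ j' < j) ∨ (i' = i ∧ j' = j) := by omega
    rcases hcase with h1 | ⟨h1, h2⟩ | ⟨h1, h2⟩
    · exact absurd (sum_lt (i := i') (j := j') hij (Or.inl h1)) (by linarith)
    · exact absurd (sum_lt (i := i') (j := j') hij (Or.inr ⟨h1, h2⟩)) (by linarith)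
    · subst h1; subst h2; linarith
  · exact sum_lt hij'

private lemma dist_formula {n : ℕ} (i j : Fin n) (hij : i ≠ j) :
    dist (Real.sqrt (1 - (2 : ℝ) ^ (-((i : ℕ) : ℤ) - 2)) • EuclideanSpace.single i (1:ℝ))
         (Real.sqrt (1 - (2 : ℝ) ^ (-((j : ℕ) : ℤ) - 2)) • EuclideanSpace.single j (1:ℝ))
      = Real.sqrt (2 - fexp (i:ℕ) - fexp (j:ℕ)) := by
  rw [EuclideanSpace.dist_eq]
  congr 1
  have hci : Real.sqrt (1 - (2 : ℝ) ^ (-((i : ℕ) : ℤ) - 2)) ^ 2 = 1 - fexp (i:ℕ) :=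
    Real.sq_sqrt (by have := fexp_le_one (i:ℕ); rw [fexp] at this; linarith)
  have hcj : Real.sqrt (1 - (2 : ℝ) ^ (-((j : ℕ) : ℤ) - 2)) ^ 2 = 1 - fexp (j:ℕ) :=
    Real.sq_sqrt (by have := fexp_le_one (j:ℕ); rw [fexp] at this; linarith)
  have hsub : ({i, j} : Finset (Fin n)) ⊆ Finset.univ := Finset.subset_univ _
  rw [← Finset.sum_subset hsub]
  · rw [Finset.sum_pair hij]
    simp only [PiLp.smul_apply, EuclideanSpace.single_apply, smul_eq_mul]
    rw [if_neg (Ne.symm hij), if_neg hij]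
    simp only [if_true, mul_one, mul_zero]
    rw [Real.dist_eq, Real.dist_eq]
    rw [sub_zero, zero_sub, abs_neg]
    rw [sq_abs, sq_abs, hci, hcj]
    ring
  · intro k _ hk
    simp only [Finset.mem_insert, Finset.mem_singleton] at hk
    push_neg at hk
    simp only [PiLp.smul_apply, EuclideanSpace.single_apply, smul_eq_mul]
    rw [if_neg hk.1, if_neg hk.2]
    simp

/-- for `p_i = √(1 − 2^{-i-1})·e_i` in `ℝ^n`, with `i < j` and `i' < j'`,
`dist(p_i,p_j) < dist(p_{i'},p_{j'})` iff `i < i'` or (`i = i'` and `j < j'`). -/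
theorem pairwise_distance_order (n : ℕ) (p : Fin n → EuclideanSpace ℝ (Fin n))
    (hp : ∀ i : Fin n,
      p i = Real.sqrt (1 - (2 : ℝ) ^ (-((i : ℕ) : ℤ) - 2)) • EuclideanSpace.single i 1) :
    ∀ i j i' j' : Fin n, i < j → i' < j' →
      (dist (p i) (p j) < dist (p i') (p j') ↔ i < i' ∨ (i = i' ∧ j < j')) := by
  intro i j i' j' hij hij'
  rw [hp i, hp j, hp i', hp j', dist_formula i j (ne_of_lt hij),
    dist_formula i' j' (ne_of_lt hij')]
  have hnn : (0:ℝ) ≤ 2 - fexp (i:ℕ) - fexp (j:ℕ) := by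
    have h1 := fexp_le_one (i:ℕ); have h2 := fexp_le_one (j:ℕ); linarith
  rw [Real.sqrt_lt_sqrt_iff hnn]
  have : 2 - fexp (i:ℕ) - fexp (j:ℕ) < 2 - fexp (i':ℕ) - fexp (j':ℕ) ↔
      fexp (i':ℕ) + fexp (j':ℕ) < fexp (i:ℕ) + fexp (j:ℕ) := by constructor <;> intro <;> linarith
  rw [this, key_iff (Fin.lt_def.mp hij) (Fin.lt_def.mp hij')]
  simp only [Fin.lt_def, Fin.val_eq_val]
end

section
/- Planar slices are pseudo-disks in the radial ordering sense: fix a cone direction in the plane with angular diameter < π/3, and for p ∈ ℝ², r ≥ 0 let s(p,r) = φ_p ∩ B(p,r) where φ_p is the translate of the cone with apex p. If x ∈ φ_p with ‖x − p‖ ≥ r, then x ∉ s(p, r); and if additionally y ∈ φ_p with ‖y − p‖ ≤ r ≤ ‖x − p‖ then ‖x − y‖ < ‖x − p‖. -/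
open EuclideanGeometry Real

theorem EuclideanGeometry.dist_lt_of_angle_lt_pi_div_three {V P : Type*}
    [NormedAddCommGroup V] [InnerProductSpace ℝ V] [MetricSpace P] [NormedAddTorsor V P]
    {p₁ p₂ p₃ : P} (hangle : ∠ p₁ p₂ p₃ < π / 3) (hle : dist p₃ p₂ ≤ dist p₁ p₂) :
    dist p₁ p₃ < dist p₁ p₂ := by
  have hne : p₃ ≠ p₂ := by
    rintro rfl
    rw [angle_self_right] at hangle
    linarith [pi_pos]
  have hpos : 0 < dist p₃ p₂ := dist_pos.2 hne
  have hcos : 1 / 2 < cos (∠ p₁ p₂ p₃) := by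
    rw [← cos_pi_div_three]
    exact cos_lt_cos_of_nonneg_of_le_pi (angle_nonneg _ _ _) (by linarith [pi_pos]) hangle
  -- With `a = dist p₁ p₂ ≥ b = dist p₃ p₂ > 0`, the law of cosines gives `2ab cos ∠ > ab ≥ b²`.
  have hsq : dist p₁ p₃ * dist p₁ p₃ < dist p₁ p₂ * dist p₁ p₂ := by
    rw [law_cos p₁ p₂ p₃]
    nlinarith [mul_lt_mul_of_pos_left hcos (mul_pos hpos (hpos.trans_le hle))]
  exact (mul_self_lt_mul_self_iff dist_nonneg dist_nonneg).2 hsq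

theorem planar_slice_pseudodisk_general (φ : Set (EuclideanSpace ℝ (Fin 2)))
    (hangle : ∀ x ∈ φ, ∀ y ∈ φ, x ≠ 0 → y ≠ 0 →
      InnerProductGeometry.angle x y < Real.pi / 3)
    (p x y : EuclideanSpace ℝ (Fin 2)) (r : ℝ)
    (hx : x - p ∈ φ) (hxr : r ≤ dist p x) :
    x ∉ ((fun z => p + z) '' φ) ∩ Metric.ball p r ∧
      (y - p ∈ φ → y ≠ p → x ≠ p → dist p y ≤ r → dist x y < dist x p) := by
  refine ⟨fun ⟨_, hball⟩ => (Metric.mem_ball'.1 hball).not_ge hxr, fun hy hyp hxp hyr => ?_⟩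
  have hangle_xpy : ∠ x p y < π / 3 :=
    hangle _ hx _ hy (sub_ne_zero.2 hxp) (sub_ne_zero.2 hyp)
  refine dist_lt_of_angle_lt_pi_div_three hangle_xpy ?_
  rw [dist_comm y, dist_comm x]
  exact hyr.trans hxr

/-- planar slices are pseudo-disks in the radial ordering sense:
for a closed convex cone `φ ⊆ ℝ²` with apex the origin and angular diameter `< π/3`,
letting `s(p,r) = (p + φ) ∩ B(p,r)`: if `x ∈ p + φ` with `‖x − p‖ ≥ r` then
`x ∉ s(p,r)`; and if additionally `y ∈ p + φ` with `‖y − p‖ ≤ r ≤ ‖x − p‖`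
then `‖x − y‖ < ‖x − p‖`. -/
theorem planar_slice_pseudodisk (φ : Set (EuclideanSpace ℝ (Fin 2)))
    (hconv : Convex ℝ φ) (h0 : (0 : EuclideanSpace ℝ (Fin 2)) ∈ φ)
    (hcone : ∀ t : ℝ, 0 ≤ t → ∀ x ∈ φ, t • x ∈ φ)
    (hangle : ∀ x ∈ φ, ∀ y ∈ φ, x ≠ 0 → y ≠ 0 →
      InnerProductGeometry.angle x y < Real.pi / 3)
    (p x y : EuclideanSpace ℝ (Fin 2)) (r : ℝ) (hr : 0 ≤ r)
    (hx : x - p ∈ φ) (hxr : r ≤ dist p x) :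
    x ∉ ((fun z => p + z) '' φ) ∩ Metric.ball p r ∧
      (y - p ∈ φ → y ≠ p → x ≠ p → dist p y ≤ r → dist x y < dist x p) :=
  planar_slice_pseudodisk_general φ hangle p x y r hx hxr
end
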